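/- arXiv:2502.00458 — 2 statements merged into one kernel-verified Lean document; each statement's English description precedes it below -/
import Mathlib

section
/- Let W ⊆ ℝ^{N+1} be a nonempty closed convex cone and a ∈ ℝ^{N+1} a nonzero vector. Then the point p ∈ W closest to a (if p ≠ 0) maximizes the function w ↦ (a·w)/‖w‖ over nonzero w ∈ W. Equivalently, for every nonzero w ∈ W, (a·p)/‖p‖ ≥ (a·w)/‖w‖. -/
open RealInnerProductSpace

/-!
Minimality of `p` gives the variational inequality `⟪a - p, w - p⟫ ≤ 0` on `W`. Testing it
with `w = 0` and `w = 2p` shows `a - p ⟂ p`, so `⟪a, p⟫ = ‖p‖²` and `⟪a - p, w⟫ ≤ 0` on `W`.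
Hence `⟪a, w⟫ ≤ ⟪p, w⟫ ≤ ‖p‖ ‖w‖` by Cauchy–Schwarz, i.e. `⟪a, w⟫ / ‖w‖ ≤ ‖p‖ = ⟪a, p⟫ / ‖p‖`.
-/

section ConeProjection

variable {E : Type*} [NormedAddCommGroup E] [InnerProductSpace ℝ E] {K : Set E} {a p : E}

theorem real_inner_sub_sub_le_zero_of_isMinOn (hK : Convex ℝ K) (hpK : p ∈ K)
    (hmin : IsMinOn (fun w => ‖a - w‖) K p) : ∀ w ∈ K, ⟪a - p, w - p⟫ ≤ 0 := by
  have : Nonempty K := ⟨⟨p, hpK⟩⟩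
  refine (norm_eq_iInf_iff_real_inner_le_zero hK hpK).1 (le_antisymm ?_ ?_)
  · exact le_ciInf fun w => hmin w.2
  · have hbdd : BddBelow (Set.range fun w : K => ‖a - w‖) :=
      ⟨0, Set.forall_mem_range.2 fun _ => norm_nonneg _⟩
    exact ciInf_le hbdd ⟨p, hpK⟩

variable (hcone : ∀ c : ℝ, 0 ≤ c → ∀ w ∈ K, c • w ∈ K) (hpK : p ∈ K)
  (hvar : ∀ w ∈ K, ⟪a - p, w - p⟫ ≤ 0)
include hcone hpK hvar

theorem real_inner_sub_self_eq_zero_of_cone : ⟪a - p, p⟫ = 0 := by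
  have h0 : ⟪a - p, 0 - p⟫ ≤ 0 := by simpa using hvar _ (hcone 0 le_rfl p hpK)
  have h2 : ⟪a - p, (2 : ℝ) • p - p⟫ ≤ 0 := hvar _ (hcone 2 zero_le_two p hpK)
  rw [zero_sub, inner_neg_right] at h0
  rw [two_smul, add_sub_cancel_right] at h2
  linarith

theorem real_inner_sub_le_zero_of_cone : ∀ w ∈ K, ⟪a - p, w⟫ ≤ 0 := fun w hw => by
  simpa [inner_sub_right, real_inner_sub_self_eq_zero_of_cone hcone hpK hvar] using hvar w hw

end ConeProjection

theorem prox_maximizes_cosine_general (N : ℕ) (W : Set (EuclideanSpace ℝ (Fin (N+1))))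
    (hconv : Convex ℝ W)
    (hcone : ∀ c : ℝ, 0 ≤ c → ∀ w ∈ W, c • w ∈ W)
    (a : EuclideanSpace ℝ (Fin (N+1)))
    (p : EuclideanSpace ℝ (Fin (N+1))) (hpW : p ∈ W)
    (hprox : ∀ w ∈ W, ‖a - p‖ ≤ ‖a - w‖) :
    ∀ w ∈ W, w ≠ 0 →
      (inner ℝ a w : ℝ) / ‖w‖ ≤ (inner ℝ a p : ℝ) / ‖p‖ := by
  intro w hw _
  have hvar := real_inner_sub_sub_le_zero_of_isMinOn hconv hpW (isMinOn_iff.2 hprox)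
  have hap : ⟪a, p⟫ = ‖p‖ ^ 2 := by
    have := real_inner_sub_self_eq_zero_of_cone hcone hpW hvar
    rwa [inner_sub_left, real_inner_self_eq_norm_sq, sub_eq_zero] at this
  have haw : ⟪a, w⟫ ≤ ‖p‖ * ‖w‖ := by
    have := real_inner_sub_le_zero_of_cone hcone hpW hvar w hw
    rw [inner_sub_left, sub_nonpos] at this
    exact this.trans (real_inner_le_norm p w)
  calc ⟪a, w⟫ / ‖w‖ ≤ ‖p‖ := div_le_of_le_mul₀ (norm_nonneg w) (norm_nonneg p) haw
    _ = ⟪a, p⟫ / ‖p‖ := by rw [hap, sq, mul_self_div_self]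

/-- The nearest point `p` on a closed convex cone `W` to `a` (if nonzero)
maximizes `w ↦ ⟪a, w⟫ / ‖w‖` over nonzero `w ∈ W`. -/
theorem prox_maximizes_cosine (N : ℕ) (W : Set (EuclideanSpace ℝ (Fin (N+1))))
    (hne : W.Nonempty) (hcl : IsClosed W) (hconv : Convex ℝ W)
    (hcone : ∀ c : ℝ, 0 ≤ c → ∀ w ∈ W, c • w ∈ W)
    (a : EuclideanSpace ℝ (Fin (N+1))) (ha : a ≠ 0)
    (p : EuclideanSpace ℝ (Fin (N+1))) (hpW : p ∈ W)
    (hprox : ∀ w ∈ W, ‖a - p‖ ≤ ‖a - w‖) (hp : p ≠ 0) :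
    ∀ w ∈ W, w ≠ 0 →
      (inner ℝ a w : ℝ) / ‖w‖ ≤ (inner ℝ a p : ℝ) / ‖p‖ :=
  prox_maximizes_cosine_general N W hconv hcone a p hpW hprox
end

section
/- For every positive integer r, the ceiling of the unique positive real root α(r) of f(r,x) = (4r-2)x^3 + (6r-6)x^2 - (12r^3+6r^2+4r+4)x - (30r^3+18r^2) satisfies ⌈α(r)⌉ ∈ {⌈√3·r + (√3+1)/2⌉, ⌈√3·r + (√3+1)/2⌉ + 1}. -/
/-!
`cuspPoly r` is convex on `[0, ∞)` and negative at `0`, so on `[0, ∞)` it is negative exactly to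
the left of its positive root `α`. Writing `β = √3 r + (√3 + 1)/2`, a direct computation in
`ℚ(√3)` shows `cuspPoly r β < 0` and, for `r ≥ 2`, `cuspPoly r (β + 1) > 0`; hence
`β < α ≤ β + 1`. For `r = 1` the bound `β + 1` fails, but `⌈β⌉ = 4` and `cuspPoly 1 5 > 0`.
-/

open Set

noncomputable def cuspPoly (r : ℤ) (x : ℝ) : ℝ :=
  (4*(r:ℝ)-2)*x^3 + (6*(r:ℝ)-6)*x^2 - (12*(r:ℝ)^3+6*(r:ℝ)^2+4*(r:ℝ)+4)*x
    - (30*(r:ℝ)^3+18*(r:ℝ)^2)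

theorem ConvexOn.neg_iff_lt_of_root {f : ℝ → ℝ} (hf : ConvexOn ℝ (Ici 0) f) (hf0 : f 0 < 0)
    {α : ℝ} (hα : 0 ≤ α) (hfα : f α = 0) {x : ℝ} (hx : 0 ≤ x) : f x < 0 ↔ x < α := by
  have hα0 : 0 < α := hα.lt_of_ne (by rintro rfl; exact hf0.ne hfα)
  constructor
  · intro hfx
    by_contra! hαx
    obtain rfl | hαx := hαx.eq_or_lt
    · exact hfx.ne hfα
    have hseg : α ∈ openSegment ℝ 0 x := by
      rw [openSegment_eq_Ioo (hα0.trans hαx)]; exact ⟨hα0, hαx⟩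
    have := hf.lt_right_of_left_lt self_mem_Ici hx hseg (hfα ▸ hf0)
    linarith
  · intro hxα
    obtain rfl | hx0 := hx.eq_or_lt
    · exact hf0
    by_contra! hfx
    have hseg : x ∈ openSegment ℝ 0 α := by rw [openSegment_eq_Ioo hα0]; exact ⟨hx0, hxα⟩
    have := hf.le_left_of_right_le self_mem_Ici hα hseg (hfα ▸ hfx)
    linarith

theorem one_lt_sqrt_three : 1 < Real.sqrt 3 :=
  (Real.lt_sqrt zero_le_one).2 (by norm_num)

theorem sqrt_three_lt_two : Real.sqrt 3 < 2 :=
  (Real.sqrt_lt' two_pos).2 (by norm_num)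

section

variable {r : ℤ}

theorem convexOn_cuspPoly (hr : 1 ≤ r) : ConvexOn ℝ (Ici 0) (cuspPoly r) := by
  have hR : (1 : ℝ) ≤ r := by exact_mod_cast hr
  refine ⟨convex_Ici 0, fun x (hx : 0 ≤ x) y (hy : 0 ≤ y) a b ha hb hab => ?_⟩
  obtain rfl : b = 1 - a := by linarith
  have hgap : a * cuspPoly r x + (1 - a) * cuspPoly r y - cuspPoly r (a * x + (1 - a) * y)
      = a * (1 - a) * (x - y) ^ 2 * ((4 * r - 2) * ((1 + a) * x + (2 - a) * y) + (6 * r - 6)) := by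
    unfold cuspPoly; ring
  have hfactor : 0 ≤ (4 * (r : ℝ) - 2) * ((1 + a) * x + (2 - a) * y) + (6 * r - 6) := by
    have : 0 ≤ (1 + a) * x + (2 - a) * y := by nlinarith
    nlinarith
  simp only [smul_eq_mul]
  nlinarith [mul_nonneg (mul_nonneg (mul_nonneg ha hb) (sq_nonneg (x - y))) hfactor]

theorem cuspPoly_zero_neg (hr : 1 ≤ r) : cuspPoly r 0 < 0 := by
  have hR : (1 : ℝ) ≤ r := by exact_mod_cast hr
  unfold cuspPoly
  nlinarith

noncomputable def cuspApprox (r : ℤ) : ℝ := Real.sqrt 3 * r + (Real.sqrt 3 + 1) / 2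

theorem cuspApprox_pos (hr : 1 ≤ r) : 0 < cuspApprox r := by
  have hR : (0 : ℝ) < r := by exact_mod_cast hr
  unfold cuspApprox
  positivity

theorem cuspPoly_cuspApprox : cuspPoly r (cuspApprox r)
    = -(12 * r ^ 2 + 18 * r + 21 / 2) + Real.sqrt 3 * (2 * r ^ 2 - 12 * r - 13 / 2) := by
  have hs : Real.sqrt 3 ^ 2 = 3 := Real.sq_sqrt (by norm_num)
  unfold cuspPoly cuspApprox
  linear_combination (4 * r ^ 4 * Real.sqrt 3 + 4 * r ^ 3 * Real.sqrt 3 + 12 * r ^ 3 + 3 * r ^ 2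
    - r * Real.sqrt 3 - 6 * r - Real.sqrt 3 / 4 - 9 / 4) * hs

theorem cuspPoly_cuspApprox_add_one : cuspPoly r (cuspApprox r + 1)
    = (24 * r ^ 3 - 6 * r - 75 / 2) + Real.sqrt 3 * (38 * r ^ 2 - 18 * r - 37 / 2) := by
  have hs : Real.sqrt 3 ^ 2 = 3 := Real.sq_sqrt (by norm_num)
  unfold cuspPoly cuspApprox
  linear_combination (4 * r ^ 4 * Real.sqrt 3 + 4 * r ^ 3 * Real.sqrt 3 + 24 * r ^ 3 + 9 * r ^ 2
    - r * Real.sqrt 3 - 9 * r - Real.sqrt 3 / 4 - 15 / 4) * hs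

theorem cuspPoly_cuspApprox_neg (hr : 1 ≤ r) : cuspPoly r (cuspApprox r) < 0 := by
  have hR : (1 : ℝ) ≤ r := by exact_mod_cast hr
  have hs := sqrt_three_lt_two
  have hs0 := Real.sqrt_nonneg 3
  rw [cuspPoly_cuspApprox]
  rcases le_or_gt (2 * (r : ℝ) ^ 2 - 12 * r - 13 / 2) 0 with h | h <;> nlinarith

theorem cuspPoly_cuspApprox_add_one_pos (hr : 2 ≤ r) : 0 < cuspPoly r (cuspApprox r + 1) := by
  have hR : (2 : ℝ) ≤ r := by exact_mod_cast hr
  have hq : 0 ≤ 38 * (r : ℝ) ^ 2 - 18 * r - 37 / 2 := by nlinarith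
  rw [cuspPoly_cuspApprox_add_one]
  nlinarith [mul_le_mul_of_nonneg_right one_lt_sqrt_three.le hq]

theorem ceil_cuspApprox_one : ⌈cuspApprox 1⌉ = 4 := by
  have hs : Real.sqrt 3 ^ 2 = 3 := Real.sq_sqrt (by norm_num)
  have hs0 := Real.sqrt_nonneg 3
  rw [Int.ceil_eq_iff]
  unfold cuspApprox
  push_cast
  constructor <;> nlinarith

theorem cuspPoly_one_five_pos : 0 < cuspPoly 1 5 := by
  unfold cuspPoly
  norm_num

end

/-- The ceiling of the unique positive root `α(r)` of `f(r,x)` is one of two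
consecutive integers determined by `√3 r + (√3+1)/2`. -/
theorem ceil_alpha_two_values (r : ℤ) (hr : 1 ≤ r) (α : ℝ)
    (hα : 0 < α ∧ cuspPoly r α = 0) :
    ⌈α⌉ = ⌈Real.sqrt 3 * (r:ℝ) + (Real.sqrt 3 + 1)/2⌉ ∨
    ⌈α⌉ = ⌈Real.sqrt 3 * (r:ℝ) + (Real.sqrt 3 + 1)/2⌉ + 1 := by
  obtain ⟨hα0, hfα⟩ := hα
  have hsign {x : ℝ} (hx : 0 ≤ x) : cuspPoly r x < 0 ↔ x < α :=
    (convexOn_cuspPoly hr).neg_iff_lt_of_root (cuspPoly_zero_neg hr) hα0.le hfα hx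
  have hlo : cuspApprox r < α := (hsign (cuspApprox_pos hr).le).1 (cuspPoly_cuspApprox_neg hr)
  have hhi : ⌈α⌉ ≤ ⌈cuspApprox r⌉ + 1 := by
    obtain rfl | hr2 := hr.eq_or_lt
    · have hα5 : α ≤ 5 := not_lt.1 fun h ↦ cuspPoly_one_five_pos.not_gt ((hsign (by norm_num)).2 h)
      rw [ceil_cuspApprox_one, Int.ceil_le]
      exact_mod_cast hα5
    · have hle : α ≤ cuspApprox r + 1 := not_lt.1 fun h ↦
        (cuspPoly_cuspApprox_add_one_pos hr2).not_gt ((hsign (by linarith [cuspApprox_pos hr])).2 h)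
      exact (Int.ceil_mono hle).trans_eq (Int.ceil_add_one _)
  have := Int.ceil_mono hlo.le
  change ⌈α⌉ = ⌈cuspApprox r⌉ ∨ ⌈α⌉ = ⌈cuspApprox r⌉ + 1
  omega
end
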